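/- If a function f on lists over an alphabet of operations satisfies prefix-preservation and f(G) linearizes the write of value 1 before the write of value 0 to a register, then in no extension of G can a reader first read 0 and then read 1, given that reads return the value of the last preceding write in the linearization. -/

import Mathlib

/-- An operation on a single register with values in `V`. -/
inductive RegOp (V : Type) : Type
  | write (v : V) : RegOp V
  | read (v : V) : RegOp V
deriving DecidableEq

/-- The value held by the register (with initial value `init`) after executing
a sequential history. -/
def lastVal {V : Type} (init : V) (l : List (RegOp V)) : V :=
  l.foldl (fun acc o => match o with | .write v => v | .read _ => acc) init

/-- A sequential history is legal if every read returns the most recent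
previously written value (or the initial value if none). -/
def RegLegal {V : Type} (init : V) (l : List (RegOp V)) : Prop :=
  ∀ i v, l[i]? = some (RegOp.read v) → v = lastVal init (l.take i)

/-
After the write of `0` at position `i₂` of `f G`, which is also position `i₂` of `f H` by
prefix preservation, `f H` contains no further write, since its writes sit at `i₁ < i₂` and `i₂`. Hence the register holds `0` at every
later position, and legality forces every later read, in particular the one at `j`, to return `0`.
-/

section LastWrite

variable {V : Type}

lemma lastVal_append (init : V) (a b : List (RegOp V)) :
    lastVal init (a ++ b) = lastVal (lastVal init a) b := by
  simp [lastVal, List.foldl_append]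

lemma lastVal_take_eq_of_last_write {init v : V} {l : List (RegOp V)} {k : ℕ}
    (hk : l[k]? = some (.write v)) (hno : ∀ m w, k < m → l[m]? ≠ some (.write w)) :
    ∀ n, k < n → lastVal init (l.take n) = v := by
  intro n hkn
  induction n with
  | zero => omega
  | succ m ih =>
    rw [List.take_add_one, lastVal_append]
    rcases Nat.lt_or_ge k m with hlt | hle
    · rcases ho : l[m]? with _ | ⟨w | w⟩
      · exact ih hlt
      · exact absurd ho (hno m _ hlt)
      · exact ih hlt
    · obtain rfl : m = k := by omega
      rw [hk]
      rfl

lemma RegLegal.read_eq_of_last_write {init v w : V} {l : List (RegOp V)} {k j : ℕ}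
    (hleg : RegLegal init l) (hk : l[k]? = some (.write v))
    (hno : ∀ m w, k < m → l[m]? ≠ some (.write w)) (hkj : k < j)
    (hj : l[j]? = some (.read w)) : w = v := by
  rw [hleg j w hj, lastVal_take_eq_of_last_write hk hno j hkj]

end LastWrite

theorem stmt_7_general (f : List (RegOp (Option Bool)) → List (RegOp (Option Bool)))
    (hpre : ∀ G H, G <+: H → f G <+: f H)
    (hleg : ∀ H, RegLegal none (f H))
    (G : List (RegOp (Option Bool))) (i₁ i₂ : ℕ) (h12 : i₁ < i₂)
    (hw0 : (f G)[i₂]? = some (RegOp.write (some false)))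
    (H : List (RegOp (Option Bool))) (hGH : G <+: H)
    (honly : ∀ k v, (f H)[k]? = some (RegOp.write v) → k = i₁ ∨ k = i₂)
    (i j : ℕ) (h2i : i₂ < i) (hij : i < j) :
    (f H)[j]? ≠ some (RegOp.read (some true)) := by
  intro hrj
  have hw0H : (f H)[i₂]? = some (RegOp.write (some false)) := by
    obtain ⟨t, ht⟩ := hpre G H hGH
    rwa [← ht, List.getElem?_append_left (List.getElem?_eq_some_iff.mp hw0).1]
  have hno : ∀ m w, i₂ < m → (f H)[m]? ≠ some (RegOp.write w) := fun m w hm hw => by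
    rcases honly m w hw with rfl | rfl <;> omega
  have := (hleg H).read_eq_of_last_write hw0H hno (h2i.trans hij) hrj
  simp at this

/-- Register values `{0, 1, ⊥}`, encoded as `Option Bool` with `⊥ = none`,
`1 = some true`, `0 = some false`; the initial value is `⊥`. If `f` is
prefix-preserving, every `f H` is legal, and in `f G` the write of `1`
precedes the write of `0` (these being the only writes), then in `f H` for
any extension `H` of `G`, after the write of `0` no read returning `0` can be
followed by a read returning `1`. -/
theorem stmt_7 (f : List (RegOp (Option Bool)) → List (RegOp (Option Bool)))
    (hpre : ∀ G H, G <+: H → f G <+: f H)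
    (hleg : ∀ H, RegLegal none (f H))
    (G : List (RegOp (Option Bool))) (i₁ i₂ : ℕ) (h12 : i₁ < i₂)
    (hw1 : (f G)[i₁]? = some (RegOp.write (some true)))
    (hw0 : (f G)[i₂]? = some (RegOp.write (some false)))
    (H : List (RegOp (Option Bool))) (hGH : G <+: H)
    (honly : ∀ k v, (f H)[k]? = some (RegOp.write v) → k = i₁ ∨ k = i₂)
    (i j : ℕ) (h2i : i₂ < i) (hij : i < j)
    (hri : (f H)[i]? = some (RegOp.read (some false))) :
    (f H)[j]? ≠ some (RegOp.read (some true)) :=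
  stmt_7_general f hpre hleg G i₁ i₂ h12 hw0 H hGH honly i j h2i hij
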